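/- Let Γ = {y ∈ ℝ² : y₂ ≥ |y₁|} and F : ℝ → ℝ², F(x) = (x, −x²), x̄ = 0. Then: (i) GMFCQ fails at x̄, i.e., there exists a nonzero λ ∈ N_Γ(F(x̄)) with ∇F(x̄)ᵀλ = 0 (namely λ = (0,−1)); (ii) MSCQ holds at x̄, i.e., there exist κ > 0 and a neighborhood U of 0 with d_{F^{-1}(Γ)}(x) ≤ κ d_Γ(F(x)) for all x ∈ U. -/

import Mathlib

/-!
`F⁻¹(Γ) = {0}`, so `d_{F⁻¹(Γ)}(x) = |x|`. For `p ∈ Γ` one has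
`|y₀| - y₁ ≤ |y₀ - p₀| + (p₁ - y₁) ≤ 2‖y - p‖`, and at `y = F(x)` the left side is `|x| + x²`;
hence MSCQ holds with `κ = 2` on all of `ℝ`.
-/

open Set Filter Topology Metric

noncomputable section

/-- Normal cone of convex analysis: `N_P(y) = {z* | ⟨z*, v - y⟩ ≤ 0 ∀ v ∈ P}`. -/
def convNormal {E : Type*} [NormedAddCommGroup E] [InnerProductSpace ℝ E]
    (P : Set E) (y : E) : Set E :=
  {v | ∀ p ∈ P, (inner ℝ v (p - y) : ℝ) ≤ 0}

/-- The vector `(a, b)` in the Euclidean plane. -/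
def v2 (a b : ℝ) : EuclideanSpace ℝ (Fin 2) :=
  (WithLp.equiv 2 (Fin 2 → ℝ)).symm ![a, b]

/-- `Γ = {y ∈ ℝ² : y₂ ≥ |y₁|}`. -/
def Gamma17 : Set (EuclideanSpace ℝ (Fin 2)) :=
  {y | |y 0| ≤ y 1}

/-- `F(x) = (x, −x²)`. -/
def F17 (x : ℝ) : EuclideanSpace ℝ (Fin 2) := v2 x (-(x ^ 2))

@[simp] lemma v2_apply_zero (a b : ℝ) : v2 a b 0 = a := rfl

@[simp] lemma v2_apply_one (a b : ℝ) : v2 a b 1 = b := rfl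

lemma inner_v2 (a b c d : ℝ) : (inner ℝ (v2 a b) (v2 c d) : ℝ) = a * c + b * d := by
  simp only [PiLp.inner_apply, Fin.sum_univ_two, v2_apply_zero, v2_apply_one,
    RCLike.inner_apply, conj_trivial]
  ring

lemma v2_zero_neg_one_ne_zero : v2 0 (-1) ≠ 0 := fun h => by
  simpa using congrArg (· 1) h

lemma v2_zero_neg_one_mem_convNormal_Gamma17 : v2 0 (-1) ∈ convNormal Gamma17 (F17 0) := by
  intro p hp
  have hp1 : 0 ≤ p 1 := (abs_nonneg _).trans hp
  have : (inner ℝ (v2 0 (-1)) (p - F17 0) : ℝ) = -p 1 := by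
    simp [PiLp.inner_apply, Fin.sum_univ_two, F17]
  linarith

lemma Gamma17_nonempty : Gamma17.Nonempty := ⟨v2 0 0, by simp [Gamma17]⟩

lemma F17_preimage_Gamma17 : F17 ⁻¹' Gamma17 = {0} := by
  ext x
  simp only [mem_preimage, Gamma17, mem_ofPred_eq, F17, v2_apply_zero, v2_apply_one,
    mem_singleton_iff]
  constructor
  · intro h
    nlinarith [abs_nonneg x, sq_abs x]
  · rintro rfl
    simp

lemma abs_sub_le_two_mul_infDist_Gamma17 (y : EuclideanSpace ℝ (Fin 2)) :
    |y 0| - y 1 ≤ 2 * infDist y Gamma17 := by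
  suffices (|y 0| - y 1) / 2 ≤ infDist y Gamma17 by linarith
  refine (le_infDist Gamma17_nonempty).2 fun p hp => ?_
  have h0 : |y 0 - p 0| ≤ dist y p := PiLp.dist_apply_le y p 0
  have h1 : |y 1 - p 1| ≤ dist y p := PiLp.dist_apply_le y p 1
  have : |y 0| - |p 0| ≤ |y 0 - p 0| := abs_sub_abs_le_abs_sub _ _
  have hp' : |p 0| ≤ p 1 := hp
  have : p 1 - y 1 ≤ |y 1 - p 1| := by rw [abs_sub_comm]; exact le_abs_self _
  linarith

lemma abs_le_two_mul_infDist_F17_Gamma17 (x : ℝ) : |x| ≤ 2 * infDist (F17 x) Gamma17 := by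
  have := abs_sub_le_two_mul_infDist_Gamma17 (F17 x)
  simp only [F17, v2_apply_zero, v2_apply_one] at this ⊢
  linarith [sq_nonneg x]

/-- (i) GMFCQ fails at `x̄ = 0` (witnessed by `λ = (0,−1)`, since `∇F(0) = (1,0)ᵀ`);
(ii) MSCQ holds at `x̄ = 0`. -/
theorem stmt17 :
    (∃ lam : EuclideanSpace ℝ (Fin 2), lam ≠ 0 ∧
        lam ∈ convNormal Gamma17 (F17 0) ∧
        (inner ℝ lam (v2 1 0) : ℝ) = 0 ∧ lam = v2 0 (-1)) ∧
    (∃ κ > (0 : ℝ), ∃ U ∈ 𝓝 (0 : ℝ), ∀ x ∈ U,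
        Metric.infDist x (F17 ⁻¹' Gamma17) ≤ κ * Metric.infDist (F17 x) Gamma17) := by
  refine ⟨⟨v2 0 (-1), v2_zero_neg_one_ne_zero, v2_zero_neg_one_mem_convNormal_Gamma17,
    by simp [inner_v2], rfl⟩, ⟨2, two_pos, univ, univ_mem, fun x _ => ?_⟩⟩
  rw [F17_preimage_Gamma17, infDist_singleton, Real.dist_0_eq_abs]
  exact abs_le_two_mul_infDist_F17_Gamma17 x
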